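/- Let M > 0. With γ₀(ε) := γ₀(M, M(1-ε)) and β₁(ε) := β₁(M, M(1-ε)) defined by the explicit formulas γ₀(M,Q) = 2√((3M²-2Q²+M√(9M²-8Q²))√(9M²-8Q²))/(3M+√(9M²-8Q²))^{5/2} and β₁(M,Q) = (M-√(M²-Q²))²/√(M²-Q²), one has √ε · γ₀(ε)·β₁(ε) → 1/16 as ε → 0⁺; in particular γ₀(ε)·β₁(ε) → ∞ as ε → 0⁺. -/
import Mathlib


/-- The essential spectral gap of the `Λ = 0` Reissner–Nordström black hole. -/
noncomputable def rnGamma0 (M Q : ℝ) : ℝ :=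
  2*Real.sqrt ((3*M^2 - 2*Q^2 + M*Real.sqrt (9*M^2 - 8*Q^2)) * Real.sqrt (9*M^2 - 8*Q^2))
    / (3*M + Real.sqrt (9*M^2 - 8*Q^2)) ^ ((5:ℝ)/2)

/-- The reciprocal surface gravity of the Cauchy horizon of the `Λ = 0`
Reissner–Nordström black hole. -/
noncomputable def rnBeta1 (M Q : ℝ) : ℝ :=
  (M - Real.sqrt (M^2 - Q^2))^2 / Real.sqrt (M^2 - Q^2)

/-- Auxiliary mass-independent model function. -/
noncomputable def rnAux (ε : ℝ) : ℝ :=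
  2 * Real.sqrt ((1 + 4*ε - 2*ε^2 + Real.sqrt (1 + 16*ε - 8*ε^2))
      * Real.sqrt (1 + 16*ε - 8*ε^2))
    / (3 + Real.sqrt (1 + 16*ε - 8*ε^2)) ^ ((5:ℝ)/2)
    * (1 - Real.sqrt ε * Real.sqrt (2 - ε))^2 / Real.sqrt (2 - ε)

lemma rpow_five_halves {x : ℝ} (hx : 0 ≤ x) : x ^ ((5:ℝ)/2) = x^2 * Real.sqrt x := by
  rw [show (5:ℝ)/2 = (2:ℝ) + 1/2 by norm_num, Real.rpow_add' hx (by norm_num),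
    Real.rpow_two, Real.sqrt_eq_rpow]

lemma rnAux_eq (M : ℝ) (hM : 0 < M) {ε : ℝ} (hε : ε ∈ Set.Ioo (0:ℝ) 1) :
    Real.sqrt ε * (rnGamma0 M (M*(1-ε)) * rnBeta1 M (M*(1-ε))) = rnAux ε := by
  obtain ⟨hε0, hε1⟩ := hε
  have h2ε : (0:ℝ) < 2 - ε := by linarith
  have hspos : (0:ℝ) < 1 + 16*ε - 8*ε^2 := by nlinarith
  set s : ℝ := Real.sqrt (1 + 16*ε - 8*ε^2) with hs
  have hs0 : 0 < s := Real.sqrt_pos.mpr hspos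
  have h1 : Real.sqrt (9*M^2 - 8*(M*(1-ε))^2) = M * s := by
    rw [show 9*M^2 - 8*(M*(1-ε))^2 = M^2 * (1 + 16*ε - 8*ε^2) by ring,
      Real.sqrt_mul (sq_nonneg M), Real.sqrt_sq hM.le]
  have h2 : Real.sqrt (M^2 - (M*(1-ε))^2) = M * (Real.sqrt ε * Real.sqrt (2-ε)) := by
    rw [show M^2 - (M*(1-ε))^2 = M^2 * (ε * (2-ε)) by ring,
      Real.sqrt_mul (sq_nonneg M), Real.sqrt_sq hM.le, Real.sqrt_mul hε0.le]
  have hA : Real.sqrt ((3*M^2 - 2*(M*(1-ε))^2 + M*(M*s)) * (M*s))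
      = M * Real.sqrt M * Real.sqrt ((1 + 4*ε - 2*ε^2 + s) * s) := by
    rw [show (3*M^2 - 2*(M*(1-ε))^2 + M*(M*s)) * (M*s)
        = M^3 * ((1 + 4*ε - 2*ε^2 + s) * s) by ring,
      Real.sqrt_mul (by positivity), show M^3 = M^2 * M by ring,
      Real.sqrt_mul (sq_nonneg M), Real.sqrt_sq hM.le]
  have hB : (3*M + M*s) ^ ((5:ℝ)/2)
      = (M^2 * Real.sqrt M) * ((3 + s) ^ ((5:ℝ)/2)) := by
    rw [show 3*M + M*s = M * (3+s) by ring, Real.mul_rpow hM.le (by positivity),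
      rpow_five_halves hM.le]
  unfold rnGamma0 rnBeta1 rnAux
  rw [h1, h2, hA, hB, ← hs]
  have hBpos : (0:ℝ) < (3 + s) ^ ((5:ℝ)/2) := Real.rpow_pos_of_pos (by positivity) _
  have hsqε : Real.sqrt ε ≠ 0 := (Real.sqrt_pos.mpr hε0).ne'
  have hsq2 : Real.sqrt (2-ε) ≠ 0 := (Real.sqrt_pos.mpr h2ε).ne'
  have hsqM : Real.sqrt M ≠ 0 := (Real.sqrt_pos.mpr hM).ne'
  field_simp

lemma rnAux_tendsto : Filter.Tendsto rnAux (nhds 0) (nhds (1/16)) := by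
  have h32 : ((4:ℝ)) ^ ((5:ℝ)/2) = 32 := by
    rw [rpow_five_halves (by norm_num), show (4:ℝ) = 2^2 by norm_num,
      Real.sqrt_sq (by norm_num)]
    norm_num
  have hcont : ContinuousAt rnAux 0 := by
    have hs : ContinuousAt (fun ε : ℝ => Real.sqrt (1 + 16*ε - 8*ε^2)) 0 := by fun_prop
    have hnum : ContinuousAt (fun ε : ℝ => 2 * Real.sqrt ((1 + 4*ε - 2*ε^2
        + Real.sqrt (1 + 16*ε - 8*ε^2)) * Real.sqrt (1 + 16*ε - 8*ε^2))) 0 := by fun_prop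
    have hden : ContinuousAt
        (fun ε : ℝ => (3 + Real.sqrt (1 + 16*ε - 8*ε^2)) ^ ((5:ℝ)/2)) 0 :=
      (continuousAt_const.add hs).rpow_const (Or.inr (by norm_num))
    have hden0 : (3 + Real.sqrt (1 + 16*(0:ℝ) - 8*(0:ℝ)^2)) ^ ((5:ℝ)/2) ≠ 0 := by
      positivity
    have hmul : ContinuousAt
        (fun ε : ℝ => (1 - Real.sqrt ε * Real.sqrt (2 - ε))^2) 0 := by fun_prop
    have hlast : ContinuousAt (fun ε : ℝ => Real.sqrt (2 - ε)) 0 := by fun_prop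
    have hlast0 : Real.sqrt (2 - (0:ℝ)) ≠ 0 := by
      simp [Real.sqrt_eq_zero']
    exact ((hnum.div hden hden0).mul hmul).div hlast hlast0
  have h0 : rnAux 0 = 1/16 := by
    have h2 : Real.sqrt 2 ≠ 0 := by positivity
    unfold rnAux
    norm_num [Real.sqrt_one, h32]
    rw [div_div, div_eq_div_iff (by positivity) (by norm_num : (16:ℝ) ≠ 0)]
    ring
  simpa [h0] using hcont.tendsto

/-- With `Q = M(1-ε)`, one has `√ε·γ₀(ε)β₁(ε) → 1/16` as `ε → 0⁺`; in particular
`γ₀(ε)β₁(ε) → ∞`, i.e. the achievable regularity `1/2 + γ₀β₁` at the Cauchy horizon blows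
up for near-extremal black holes. -/
theorem rn_gamma0_beta1_near_extremal (M : ℝ) (hM : 0 < M) :
    Filter.Tendsto
      (fun ε : ℝ => Real.sqrt ε * (rnGamma0 M (M*(1-ε)) * rnBeta1 M (M*(1-ε))))
      (nhdsWithin 0 (Set.Ioi 0)) (nhds (1/16)) ∧
    Filter.Tendsto (fun ε : ℝ => rnGamma0 M (M*(1-ε)) * rnBeta1 M (M*(1-ε)))
      (nhdsWithin 0 (Set.Ioi 0)) Filter.atTop := by
  have hmem : Set.Ioo (0:ℝ) 1 ∈ nhdsWithin 0 (Set.Ioi 0) :=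
    Ioo_mem_nhdsGT_of_mem (by simp)
  have heq : (fun ε : ℝ => Real.sqrt ε * (rnGamma0 M (M*(1-ε)) * rnBeta1 M (M*(1-ε))))
      =ᶠ[nhdsWithin 0 (Set.Ioi 0)] rnAux := by
    filter_upwards [hmem] with ε hε
    exact rnAux_eq M hM hε
  have h1 : Filter.Tendsto
      (fun ε : ℝ => Real.sqrt ε * (rnGamma0 M (M*(1-ε)) * rnBeta1 M (M*(1-ε))))
      (nhdsWithin 0 (Set.Ioi 0)) (nhds (1/16)) :=
    (rnAux_tendsto.mono_left nhdsWithin_le_nhds).congr' heq.symm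
  refine ⟨h1, ?_⟩
  have hsqrt : Filter.Tendsto (fun ε : ℝ => (Real.sqrt ε)⁻¹)
      (nhdsWithin 0 (Set.Ioi 0)) Filter.atTop := by
    apply Filter.Tendsto.inv_tendsto_nhdsGT_zero
    apply tendsto_nhdsWithin_of_tendsto_nhds_of_eventually_within
    · simpa using (Real.continuous_sqrt.continuousAt (x := (0:ℝ))).tendsto.mono_left
        nhdsWithin_le_nhds
    · filter_upwards [self_mem_nhdsWithin] with ε (hε : 0 < ε)
      exact Real.sqrt_pos.mpr hε
  have h2 : Filter.Tendsto
      (fun ε : ℝ => Real.sqrt ε * (rnGamma0 M (M*(1-ε)) * rnBeta1 M (M*(1-ε)))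
        * (Real.sqrt ε)⁻¹)
      (nhdsWithin 0 (Set.Ioi 0)) Filter.atTop :=
    Filter.Tendsto.pos_mul_atTop (by norm_num) h1 hsqrt
  refine h2.congr' ?_
  filter_upwards [self_mem_nhdsWithin] with ε (hε : 0 < ε)
  have : Real.sqrt ε ≠ 0 := (Real.sqrt_pos.mpr hε).ne'
  field_simp
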